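/- Let K be a metric space, W a nonempty subset of K, and f : W → ℂ a bounded function with f ∈ D(W). Let f·χ_W : K → ℂ denote the function equal to f on W and to 0 off W. If W is a DCS (a difference of two closed sets), then f·χ_W ∈ D(K) and ‖f·χ_W‖_{D(K)} ≤ 2‖f‖_{D(W)}; if W is open, then ‖f·χ_W‖_{D(K)} = ‖f‖_{D(W)}. -/

import Mathlib

open Filter Set Topology ENNReal

noncomputable section

universe u v

/-- The `ℓ¹`-type bound `sup_k Σ_j |φ_j(k)|` of a sequence of functions, in `ℝ≥0∞`. -/
def DBound {K : Type u} [MetricSpace K] (φ : ℕ → K → ℂ) : ℝ≥0∞ :=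
  ⨆ k : K, ∑' j : ℕ, (‖φ j k‖₊ : ℝ≥0∞)

/-- `φ` is a sequence of continuous functions summing pointwise to `f`. -/
def IsDRep {K : Type u} [MetricSpace K] (f : K → ℂ) (φ : ℕ → K → ℂ) : Prop :=
  (∀ j, Continuous (φ j)) ∧ ∀ k, HasSum (fun j => φ j k) (f k)

/-- `f` belongs to `D(K)`: it has a representing sequence with finite bound. -/
def MemD {K : Type u} [MetricSpace K] (f : K → ℂ) : Prop :=
  ∃ φ : ℕ → K → ℂ, IsDRep f φ ∧ DBound φ < ⊤

/-- The `D`-norm of `f`, equal to `⊤` when `f ∉ D(K)`. -/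
def DNorm {K : Type u} [MetricSpace K] (f : K → ℂ) : ℝ≥0∞ :=
  ⨅ (φ : ℕ → K → ℂ) (_ : IsDRep f φ), DBound φ

/-- The quotient `D`-seminorm: distance in `D`-norm to the bounded continuous functions. -/
def qDNorm {K : Type u} [MetricSpace K] (f : K → ℂ) : ℝ≥0∞ :=
  ⨅ (φ : K → ℂ) (_ : Continuous φ ∧ ∃ C : ℝ, ∀ k, ‖φ k‖ ≤ C), DNorm (f - φ)

/-- Upper semicontinuous envelope of `g`, computed relative to the subspace `L`. -/
def uscEnvWithin {K : Type u} [MetricSpace K] (L : Set K) (g : K → ℝ≥0∞) (x : K) : ℝ≥0∞ :=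
  ⨅ U ∈ 𝓝 x, ⨆ y ∈ U ∩ L, g y

/-- `limsup_{y→x, y ∈ L} (|f(y) - f(x)| + g(y))` (non-exclusive limsup, relative to `L`). -/
def toscSuccWithin {K : Type u} [MetricSpace K] (f : K → ℂ) (L : Set K)
    (g : K → ℝ≥0∞) (x : K) : ℝ≥0∞ :=
  ⨅ U ∈ 𝓝 x, ⨆ y ∈ U ∩ L, ((‖f y - f x‖₊ : ℝ≥0∞) + g y)

/-- The finite oscillations `osc_n (f|_L)` of `f` restricted to `L`. -/
def oscNWithin {K : Type u} [MetricSpace K] (f : K → ℂ) (L : Set K) : ℕ → K → ℝ≥0∞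
  | 0 => fun _ => 0
  | n + 1 => uscEnvWithin L (toscSuccWithin f L (oscNWithin f L n))

/-- The oscillation `osc (f|_L)` of `f` restricted to `L`. -/
def oscWithin {K : Type u} [MetricSpace K] (f : K → ℂ) (L : Set K) : K → ℝ≥0∞ :=
  oscNWithin f L 1

/-- The finite oscillations `osc_n f`. -/
def oscN {K : Type u} [MetricSpace K] (f : K → ℂ) (n : ℕ) : K → ℝ≥0∞ :=
  oscNWithin f Set.univ n

/-- `osc_ω (f|_L)`: the usc envelope (relative to `L`) of `sup_n osc_n (f|_L)`. -/
def oscOmegaWithin {K : Type u} [MetricSpace K] (f : K → ℂ) (L : Set K) : K → ℝ≥0∞ :=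
  uscEnvWithin L (fun x => ⨆ n : ℕ, oscNWithin f L n x)

/-- `osc_ω f`. -/
def oscOmega {K : Type u} [MetricSpace K] (f : K → ℂ) : K → ℝ≥0∞ :=
  oscOmegaWithin f Set.univ

/-- `osc_{ω+1} (f|_L)`. -/
def oscOmegaSuccWithin {K : Type u} [MetricSpace K] (f : K → ℂ) (L : Set K) : K → ℝ≥0∞ :=
  uscEnvWithin L (toscSuccWithin f L (oscOmegaWithin f L))

/-- The oscillation sets `os_n(f, (ε_i))` (here `ε : ℕ → ℝ` is 0-indexed, so `ε 0 = ε_1`). -/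
def osSets {K : Type u} [MetricSpace K] (f : K → ℂ) (ε : ℕ → ℝ) : ℕ → Set K
  | 0 => Set.univ
  | n + 1 => {x ∈ osSets f ε n | ENNReal.ofReal (ε n) ≤ oscWithin f (osSets f ε n) x}

/-- The `ε`-Baire index `i_B(f, ε) = sup {n : os_n(f,ε) ≠ ∅} ∈ ℕ∞`. -/
def baireIndexE {K : Type u} [MetricSpace K] (f : K → ℂ) (ε : ℝ) : ℕ∞ :=
  ⨆ (n : ℕ) (_ : (osSets f (fun _ => ε) n).Nonempty), (n : ℕ∞)

/-- The Baire index `i_B(f) = sup_{ε > 0} i_B(f,ε)`. -/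
def baireIndexTotal {K : Type u} [MetricSpace K] (f : K → ℂ) : ℕ∞ :=
  ⨆ (ε : ℝ) (_ : 0 < ε), baireIndexE f ε

/-- The sets `os_n(f, ω, ε)` defined using `osc_ω` of successive restrictions. -/
def osOmegaSets {K : Type u} [MetricSpace K] (f : K → ℂ) (ε : ℝ≥0∞) : ℕ → Set K
  | 0 => Set.univ
  | n + 1 => {x ∈ osOmegaSets f ε n | ε ≤ oscOmegaWithin f (osOmegaSets f ε n) x}

/-- The index `i(f, ω, ε)`, valued in `ℝ≥0∞`. -/
def iOmega {K : Type u} [MetricSpace K] (f : K → ℂ) (ε : ℝ≥0∞) : ℝ≥0∞ :=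
  ⨆ (n : ℕ) (_ : (osOmegaSets f ε n).Nonempty), (n : ℝ≥0∞)

/-- The transfinite oscillations `osc_β f`. -/
def oscOrd {K : Type u} [MetricSpace K] (f : K → ℂ) (β : Ordinal.{v}) : K → ℝ≥0∞ :=
  Ordinal.limitRecOn β (fun _ => 0)
    (fun _ ih => uscEnvWithin Set.univ (toscSuccWithin f Set.univ ih))
    (fun γ _ ih => uscEnvWithin Set.univ (fun x => ⨆ (α : Ordinal) (h : α < γ), ih α h x))

/-- The weight of a topological space: least cardinality of a basis. -/
def tweight (K : Type u) [TopologicalSpace K] : Cardinal.{u} :=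
  ⨅ (B : Set (Set K)) (_ : TopologicalSpace.IsTopologicalBasis B), Cardinal.mk B

/-- `f` belongs to `B_{1/4}(K)`. -/
def MemB14 {K : Type u} [MetricSpace K] (f : K → ℂ) : Prop :=
  ∃ (g : ℕ → K → ℂ) (lam : ℝ≥0∞), lam < ⊤ ∧
    (∀ n, MemD (g n) ∧ DNorm (g n) ≤ lam) ∧ TendstoUniformly g f atTop

/-- The `B_{1/4}`-norm of `f`. -/
def B14Norm {K : Type u} [MetricSpace K] (f : K → ℂ) : ℝ≥0∞ :=
  ⨅ (lam : ℝ≥0∞) (_ : ∃ g : ℕ → K → ℂ,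
    (∀ n, MemD (g n) ∧ DNorm (g n) ≤ lam) ∧ TendstoUniformly g f atTop), lam

/-- `f` belongs to `SD(K)`: the closure in `D`-norm of the simple `D`-functions. -/
def MemSD {K : Type u} [MetricSpace K] (f : K → ℂ) : Prop :=
  MemD f ∧ ∀ ε : ℝ≥0∞, 0 < ε →
    ∃ φ : K → ℂ, (Set.range φ).Finite ∧ MemD φ ∧ DNorm (f - φ) < ε

/-- The algebra of sets generated by the open subsets of `K`. -/
inductive DAlg (K : Type u) [TopologicalSpace K] : Set K → Prop
  | basic (U : Set K) : IsOpen U → DAlg K U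
  | compl (A : Set K) : DAlg K A → DAlg K Aᶜ
  | union (A B : Set K) : DAlg K A → DAlg K B → DAlg K (A ∪ B)

/-- `W` is a difference of two closed sets. -/
def IsDCS {K : Type u} [TopologicalSpace K] (W : Set K) : Prop :=
  ∃ A B : Set K, IsClosed A ∧ IsClosed B ∧ W = A \ B

/-- The boundary of `A ∩ L` relative to the subspace `L`. -/
def relBoundary {K : Type u} [TopologicalSpace K] (L A : Set K) : Set K :=
  L ∩ closure (A ∩ L) ∩ closure (L \ A)

/-- The iterated boundaries `∂^n A` (with `∂^0 A = K`). -/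
def iterBoundary {K : Type u} [TopologicalSpace K] (A : Set K) : ℕ → Set K
  | 0 => Set.univ
  | n + 1 => relBoundary (iterBoundary A n) A

/-- The Baire index `i(A)` of a set: the largest `n` with `∂^n A ≠ ∅`. -/
def setIndex {K : Type u} [TopologicalSpace K] (A : Set K) : ℕ∞ :=
  ⨆ (n : ℕ) (_ : (iterBoundary A n).Nonempty), (n : ℕ∞)

/-- The iterated derived sets `K^{(n)}` of the space `K`. -/
def derivedIter (K : Type u) [TopologicalSpace K] : ℕ → Set K
  | 0 => Set.univ
  | n + 1 => {x | AccPt x (Filter.principal (derivedIter K n))}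

end

/-!
Extension by zero from an open set `V` costs nothing: a partition of unity `θₙ` of `V` by
continuous functions with closed supports inside `V` turns a representation `f = Σ φⱼ` on `V`
into the representation `Σ θₙ φⱼ` of `f·χ_V` on `K`, and `Σ θₙ = 1` on `V` keeps the bound.
For a closed set `C`, Tietze-extend each `φⱼ` to `Gⱼ` and cut `Gⱼ` off (Urysohn) where the
partial sums of `|Gᵢ|` reach `‖f‖ + ε`; this yields `F ∈ D(K)` extending `f` with norm at
most `‖f‖ + ε`, and `f·χ_C = F - F·χ_{Cᶜ}` with the last term handled by the open case, whence
the factor `2`. A DCS `A \ B` is closed in the open subspace `Bᶜ`, so the two cases compose.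
-/

open Metric
open scoped NNReal

variable {X Y : Type*} [MetricSpace X] [MetricSpace Y]

theorem ENNReal.tsum_le_of_eq_zero_of_le_sum_range {a b : ℕ → ℝ≥0∞} {c : ℝ≥0∞}
    (hba : ∀ j, b j ≤ a j) (hb : ∀ j, c ≤ ∑ i ∈ Finset.range (j + 1), a i → b j = 0) :
    ∑' j, b j ≤ c := by
  have hpartial : ∀ N, ∑ j ∈ Finset.range N, b j ≤ min c (∑ j ∈ Finset.range N, a j) := by
    intro N
    induction N with
    | zero => simp
    | succ N ih =>
      rw [Finset.sum_range_succ, Finset.sum_range_succ]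
      by_cases hN : c ≤ ∑ i ∈ Finset.range (N + 1), a i
      · rw [hb N hN, add_zero]
        exact ih.trans (min_le_min le_rfl le_self_add)
      · rw [Finset.sum_range_succ, not_le] at hN
        have hle := add_le_add (ih.trans (min_le_right _ _)) (hba N)
        exact le_min (hle.trans hN.le) hle
  exact ENNReal.tsum_le_of_sum_range_le fun N => (hpartial N).trans (min_le_left _ _)

theorem summable_norm_of_tsum_nnnorm_ne_top {v : ℕ → ℂ} (h : ∑' j, (‖v j‖₊ : ℝ≥0∞) ≠ ⊤) :
    Summable fun j => ‖v j‖ :=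
  NNReal.summable_coe.mpr (ENNReal.tsum_coe_ne_top_iff_summable.mp h)

theorem IsOpen.exists_seq_tsupport_subset_hasSum_one {V : Set X} (hV : IsOpen V) :
    ∃ θ : ℕ → X → ℝ, (∀ n, Continuous (θ n)) ∧ (∀ n x, 0 ≤ θ n x) ∧
      (∀ n, tsupport (θ n) ⊆ V) ∧ ∀ x ∈ V, HasSum (fun n => θ n x) 1 := by
  rcases Set.eq_empty_or_nonempty Vᶜ with hVc | hVc
  · refine ⟨fun n _ => if n = 0 then 1 else 0, fun n => continuous_const, fun n x => ?_,
      fun n => by simp [compl_empty_iff.mp hVc], fun x _ => hasSum_ite_eq 0 1⟩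
    dsimp only
    split_ifs <;> norm_num
  set u : X → ℝ := fun x => infDist x Vᶜ
  have hu_pos (x : X) : x ∈ V ↔ 0 < u x := by
    rw [← hV.isClosed_compl.notMem_iff_infDist_pos hVc, notMem_compl_iff]
  set S : ℕ → X → ℝ := fun n x => min 1 (max 0 (n * u x - 1))
  have hS_mono (n : ℕ) (x : X) : S n x ≤ S (n + 1) x := by
    have : (n : ℝ) * u x ≤ (n + 1 : ℕ) * u x := by gcongr; exacts [infDist_nonneg, by simp]
    simp only [S]
    gcongr
  have hS_zero (n : ℕ) (x : X) (h : (n : ℝ) * u x ≤ 1) : S n x = 0 := by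
    simp only [S, max_eq_left (sub_nonpos.2 h), min_eq_right zero_le_one]
  have hS_one (n : ℕ) (x : X) (h : 2 ≤ (n : ℝ) * u x) : S n x = 1 :=
    min_eq_left (le_max_of_le_right (by linarith))
  refine ⟨fun n x => S (n + 1) x - S n x, fun n => by fun_prop,
    fun n x => sub_nonneg.2 (hS_mono n x), fun n => ?_, fun x hx => ?_⟩
  · have hsupp : Function.support (fun x => S (n + 1) x - S n x) ⊆
        {x | 1 ≤ (n + 1 : ℕ) * u x} := by
      intro x hx
      by_contra hlt
      have hlt : ((n + 1 : ℕ) : ℝ) * u x ≤ 1 := (not_le.mp hlt).le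
      refine hx ?_
      have : (n : ℝ) * u x ≤ 1 := le_trans (by gcongr; exacts [infDist_nonneg, by simp]) hlt
      simp only [hS_zero _ _ hlt, hS_zero _ _ this, sub_zero]
    refine (closure_minimal hsupp (isClosed_le continuous_const (by fun_prop))).trans fun x hx => ?_
    rw [hu_pos]
    exact pos_of_mul_pos_right (one_pos.trans_le hx) (by positivity)
  · have hux : 0 < u x := (hu_pos x).mp hx
    rw [hasSum_iff_tendsto_nat_of_nonneg (fun n => sub_nonneg.2 (hS_mono n x))]
    simp only [Finset.sum_range_sub (fun n => S n x), hS_zero 0 x (by simp), sub_zero]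
    refine tendsto_const_nhds.congr' ((eventually_ge_atTop ⌈2 / u x⌉₊).mono fun N hN => ?_)
    refine (hS_one N x ?_).symm
    rw [← div_le_iff₀ hux]
    exact (Nat.le_ceil _).trans (by exact_mod_cast hN)

theorem tsum_nnnorm_le_dBound (φ : ℕ → X → ℂ) (x : X) :
    ∑' j, (‖φ j x‖₊ : ℝ≥0∞) ≤ DBound φ :=
  le_iSup (fun k => ∑' j, (‖φ j k‖₊ : ℝ≥0∞)) x

theorem dNorm_le_dBound {f : X → ℂ} {φ : ℕ → X → ℂ} (h : IsDRep f φ) : DNorm f ≤ DBound φ :=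
  iInf₂_le φ h

theorem memD_iff_dNorm_lt_top {f : X → ℂ} : MemD f ↔ DNorm f < ⊤ := by
  refine ⟨fun ⟨φ, hφ, hlt⟩ => (dNorm_le_dBound hφ).trans_lt hlt, fun h => ?_⟩
  simp only [DNorm, iInf_lt_iff] at h
  obtain ⟨φ, hφ, hlt⟩ := h
  exact ⟨φ, hφ, hlt⟩

theorem IsDRep.comp {f : X → ℂ} {φ : ℕ → X → ℂ} (h : IsDRep f φ) {m : Y → X}
    (hm : Continuous m) : IsDRep (f ∘ m) (fun j => φ j ∘ m) :=
  ⟨fun j => (h.1 j).comp hm, fun y => h.2 (m y)⟩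

theorem dBound_comp_le (φ : ℕ → X → ℂ) (m : Y → X) : DBound (fun j => φ j ∘ m) ≤ DBound φ :=
  iSup_le fun y => tsum_nnnorm_le_dBound φ (m y)

theorem dNorm_comp_le (f : X → ℂ) {m : Y → X} (hm : Continuous m) : DNorm (f ∘ m) ≤ DNorm f :=
  le_iInf₂ fun φ hφ => (dNorm_le_dBound (hφ.comp hm)).trans (dBound_comp_le φ m)

theorem dNorm_le_mul_dNorm {f : Y → ℂ} {g : X → ℂ} {c : ℝ≥0∞} (hc₀ : c ≠ 0) (hc : c ≠ ⊤)
    (h : ∀ φ, IsDRep f φ → DBound φ ≠ ⊤ → ∀ ε : ℝ≥0, 0 < ε →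
      ∃ ψ, IsDRep g ψ ∧ DBound ψ ≤ c * DBound φ + ε) :
    DNorm g ≤ c * DNorm f := by
  simp only [DNorm, ENNReal.mul_iInf_of_ne hc₀ hc]
  refine le_iInf₂ fun φ hφ => ?_
  rcases eq_or_ne (DBound φ) ⊤ with hφ_top | hφ_fin
  · simp [hφ_top, ENNReal.mul_top hc₀]
  refine ENNReal.le_of_forall_pos_le_add fun ε hε _ => ?_
  obtain ⟨ψ, hψ, hb⟩ := h φ hφ hφ_fin ε hε
  exact (dNorm_le_dBound hψ).trans hb

theorem exists_isDRep_of_hasSum {ι : Type*} [Countable ι] [Infinite ι] {f : X → ℂ}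
    {Ψ : ι → X → ℂ} (hc : ∀ i, Continuous (Ψ i)) (hs : ∀ x, HasSum (fun i => Ψ i x) (f x)) :
    ∃ φ, IsDRep f φ ∧ DBound φ = ⨆ x, ∑' i, (‖Ψ i x‖₊ : ℝ≥0∞) := by
  obtain ⟨e⟩ := nonempty_equiv_of_countable (α := ℕ) (β := ι)
  refine ⟨fun n => Ψ (e n), ⟨fun n => hc _, fun x => e.hasSum_iff.mpr (hs x)⟩, ?_⟩
  exact iSup_congr fun x => e.tsum_eq fun i => (‖Ψ i x‖₊ : ℝ≥0∞)

theorem IsDRep.exists_sub {f₁ f₂ : X → ℂ} {φ₁ φ₂ : ℕ → X → ℂ} (h₁ : IsDRep f₁ φ₁)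
    (h₂ : IsDRep f₂ φ₂) : ∃ φ, IsDRep (f₁ - f₂) φ ∧ DBound φ ≤ DBound φ₁ + DBound φ₂ := by
  obtain ⟨φ, hφ, hb⟩ := exists_isDRep_of_hasSum (f := f₁ - f₂) (Ψ := Sum.elim φ₁ (-φ₂))
    (fun i => by cases i; exacts [h₁.1 _, (h₂.1 _).neg])
    (fun x => by
      rw [Pi.sub_apply, sub_eq_add_neg]
      exact HasSum.sum (f := fun i => Sum.elim φ₁ (-φ₂) i x) (h₁.2 x) (h₂.2 x).neg)
  refine ⟨φ, hφ, hb ▸ iSup_le fun x => ?_⟩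
  rw [ENNReal.summable.tsum_sum ENNReal.summable]
  simp only [Sum.elim_inl, Sum.elim_inr, Pi.neg_apply, nnnorm_neg]
  exact add_le_add (tsum_nnnorm_le_dBound φ₁ x) (tsum_nnnorm_le_dBound φ₂ x)

theorem IsOpen.continuous_dite_mul_of_tsupport_subset {V : Set X} [DecidablePred (· ∈ V)]
    (hV : IsOpen V) {θ : X → ℝ} (hθ : Continuous θ) (hθV : tsupport θ ⊆ V) {F : V → ℂ}
    (hF : Continuous F) : Continuous fun x => if hx : x ∈ V then (θ x : ℂ) * F ⟨x, hx⟩ else 0 := by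
  refine ContinuousOn.continuous_of_tsupport_subset ?_ hV ((closure_mono fun x hx => ?_).trans hθV)
  · rw [continuousOn_iff_continuous_domRestrict]
    refine ((Complex.continuous_ofReal.comp (hθ.comp continuous_subtype_val)).mul hF).congr
      fun v => ?_
    simp [v.2]
  · contrapose! hx
    by_cases hxV : x ∈ V
    · simp [hxV, Function.notMem_support.mp hx]
    · simp [hxV]

theorem IsOpen.exists_isDRep_of_restrict {V : Set X} (hV : IsOpen V) {g : X → ℂ}
    (hg : ∀ x ∉ V, g x = 0) {φ : ℕ → V → ℂ} (hφ : IsDRep (V.domRestrict g) φ)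
    (hfin : DBound φ ≠ ⊤) : ∃ ψ, IsDRep g ψ ∧ DBound ψ ≤ DBound φ := by
  classical
  obtain ⟨θ, hθc, hθ0, hθV, hθ1⟩ := hV.exists_seq_tsupport_subset_hasSum_one
  let Ψ : ℕ × ℕ → X → ℂ := fun p x => if hx : x ∈ V then θ p.1 x * φ p.2 ⟨x, hx⟩ else 0
  have hΨV (p : ℕ × ℕ) (v : V) : Ψ p v = θ p.1 v * φ p.2 v := dif_pos v.2
  have hΨ_off (p : ℕ × ℕ) (x : X) (hx : x ∉ V) : Ψ p x = 0 := dif_neg hx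
  have hΨc (p : ℕ × ℕ) : Continuous (Ψ p) :=
    hV.continuous_dite_mul_of_tsupport_subset (hθc p.1) (hθV p.1) (hφ.1 p.2)
  have hθ_nnnorm (v : V) : ∑' n, (‖(θ n v : ℂ)‖₊ : ℝ≥0∞) = 1 := by
    simp_rw [Complex.nnnorm_real, ← enorm_eq_nnnorm, Real.enorm_eq_ofReal (hθ0 _ _)]
    rw [← ENNReal.ofReal_tsum_of_nonneg (hθ0 · v) (hθ1 v v.2).summable, (hθ1 v v.2).tsum_eq,
      ENNReal.ofReal_one]
  have hφ_norm (v : V) : Summable fun j => ‖φ j v‖ :=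
    summable_norm_of_tsum_nnnorm_ne_top (ne_top_of_le_ne_top hfin (tsum_nnnorm_le_dBound φ v))
  have hΨs (x : X) : HasSum (fun p => Ψ p x) (g x) := by
    by_cases hx : x ∈ V
    · have hθ : HasSum (fun n => (θ n x : ℂ)) 1 :=
        Complex.ofReal_one ▸ Complex.hasSum_ofReal.mpr (hθ1 x hx)
      have hθ_norm : Summable fun n => ‖(θ n x : ℂ)‖ := by
        simp only [Complex.norm_real, Real.norm_of_nonneg (hθ0 _ x)]
        exact (hθ1 x hx).summable
      have hΨx : (fun p => Ψ p x) = fun p : ℕ × ℕ => (θ p.1 x : ℂ) * φ p.2 ⟨x, hx⟩ :=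
        funext fun p => hΨV p ⟨x, hx⟩
      have hprod := hθ.mul (hφ.2 ⟨x, hx⟩)
        (summable_mul_of_summable_norm (f := fun n => (θ n x : ℂ)) (g := fun j => φ j ⟨x, hx⟩)
          hθ_norm (hφ_norm ⟨x, hx⟩))
      rw [hΨx, ← one_mul (g x)]
      exact hprod
    · simp [hΨ_off _ x hx, hg x hx]
  obtain ⟨ψ, hψ, hb⟩ := exists_isDRep_of_hasSum hΨc hΨs
  refine ⟨ψ, hψ, hb ▸ iSup_le fun x => ?_⟩
  by_cases hx : x ∈ V
  · calc ∑' p, (‖Ψ p x‖₊ : ℝ≥0∞)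
        = ∑' n, ∑' j, (‖(θ n x : ℂ)‖₊ : ℝ≥0∞) * ‖φ j ⟨x, hx⟩‖₊ := by
          rw [ENNReal.tsum_prod']
          simp only [hΨV _ ⟨x, hx⟩, nnnorm_mul, ENNReal.coe_mul]
      _ = (∑' n, (‖(θ n x : ℂ)‖₊ : ℝ≥0∞)) * ∑' j, (‖φ j ⟨x, hx⟩‖₊ : ℝ≥0∞) := by
          simp_rw [ENNReal.tsum_mul_left, ENNReal.tsum_mul_right]
      _ ≤ DBound φ := by
          rw [hθ_nnnorm ⟨x, hx⟩, one_mul]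
          exact tsum_nnnorm_le_dBound φ ⟨x, hx⟩
  · simp [hΨ_off _ x hx]

theorem IsClosed.exists_isDRep_extension {C : Set X} (hC : IsClosed C) {f : C → ℂ}
    {φ : ℕ → C → ℂ} (hφ : IsDRep f φ) (hfin : DBound φ ≠ ⊤) {ε : ℝ≥0} (hε : 0 < ε) :
    ∃ (F : X → ℂ) (ψ : ℕ → X → ℂ), IsDRep F ψ ∧ C.domRestrict F = f ∧
      DBound ψ ≤ DBound φ + ε := by
  set c := DBound φ + ε
  choose G hG using fun j => ContinuousMap.exists_restrict_eq hC ⟨φ j, hφ.1 j⟩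
  have hGC (j : ℕ) (x : C) : G j x = φ j x := DFunLike.congr_fun (hG j) x
  let U : ℕ → Set X := fun j => {x | ∑ i ∈ Finset.range (j + 1), (‖G i x‖₊ : ℝ≥0∞) < c}
  have hU (j : ℕ) : IsOpen (U j) := isOpen_lt (by fun_prop) continuous_const
  have hCU (j : ℕ) : C ⊆ U j := fun x hx => calc
    ∑ i ∈ Finset.range (j + 1), (‖G i x‖₊ : ℝ≥0∞)
      = ∑ i ∈ Finset.range (j + 1), (‖φ i ⟨x, hx⟩‖₊ : ℝ≥0∞) := by simp only [← hGC]
    _ ≤ DBound φ := (ENNReal.sum_le_tsum _).trans (tsum_nnnorm_le_dBound φ ⟨x, hx⟩)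
    _ < c := ENNReal.lt_add_right hfin (by simpa using hε.ne')
  choose σ hσ0 hσ1 hσ01 using fun j => exists_continuous_zero_one_of_isClosed
    (hU j).isClosed_compl hC (disjoint_compl_left_iff_subset.mpr (hCU j))
  let ψ : ℕ → X → ℂ := fun j x => (σ j x : ℂ) * G j x
  have hψC (j : ℕ) (x : C) : ψ j x = φ j x := by simp [ψ, hσ1 j x.2, hGC]
  have hψ_le (x : X) : ∑' j, (‖ψ j x‖₊ : ℝ≥0∞) ≤ c := by
    refine ENNReal.tsum_le_of_eq_zero_of_le_sum_range (a := fun j => ‖G j x‖₊)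
      (fun j => ?_) (fun j hj => ?_)
    · simp only [ψ, nnnorm_mul, Complex.nnnorm_real, ENNReal.coe_mul]
      refine mul_le_of_le_one_left zero_le ?_
      rw [ENNReal.coe_le_one_iff, ← NNReal.coe_le_one, coe_nnnorm,
        Real.norm_of_nonneg (hσ01 j x).1]
      exact (hσ01 j x).2
    · simp [ψ, hσ0 j (not_lt.mpr hj : x ∉ U j)]
  have hψs (x : X) : Summable fun j => ψ j x :=
    .of_norm (summable_norm_of_tsum_nnnorm_ne_top (ne_top_of_le_ne_top (by finiteness) (hψ_le x)))
  refine ⟨fun x => ∑' j, ψ j x, ψ, ⟨fun j => by fun_prop, fun x => (hψs x).hasSum⟩, ?_,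
    iSup_le hψ_le⟩
  funext x
  rw [← (hφ.2 x).tsum_eq]
  exact tsum_congr fun j => hψC j x

theorem IsClosed.exists_isDRep_of_restrict {C : Set X} (hC : IsClosed C) {g : X → ℂ}
    (hg : ∀ x ∉ C, g x = 0) {φ : ℕ → C → ℂ} (hφ : IsDRep (C.domRestrict g) φ)
    (hfin : DBound φ ≠ ⊤) {ε : ℝ≥0} (hε : 0 < ε) :
    ∃ ψ, IsDRep g ψ ∧ DBound ψ ≤ 2 * DBound φ + ε := by
  obtain ⟨F, ψ, hψ, hFC, hψb⟩ := hC.exists_isDRep_extension hφ hfin (half_pos hε)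
  have hψfin : DBound ψ ≠ ⊤ := ne_top_of_le_ne_top (by finiteness) hψb
  have hFCc : Cᶜ.domRestrict (Cᶜ.indicator F) = F ∘ (↑) :=
    funext fun x => indicator_of_mem x.2 F
  obtain ⟨ρ, hρ, hρb⟩ := hC.isOpen_compl.exists_isDRep_of_restrict
    (fun x hx => indicator_of_notMem hx F) (hFCc ▸ hψ.comp continuous_subtype_val)
    (ne_top_of_le_ne_top hψfin (dBound_comp_le ψ _))
  have hg_eq : g = F - Cᶜ.indicator F := by
    funext x
    by_cases hx : x ∈ C
    · rw [Pi.sub_apply, indicator_of_notMem (notMem_compl_iff.mpr hx), sub_zero]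
      exact (congrFun hFC ⟨x, hx⟩).symm
    · rw [Pi.sub_apply, indicator_of_mem hx, sub_self, hg x hx]
  obtain ⟨χ, hχ, hχb⟩ := hψ.exists_sub hρ
  refine ⟨χ, hg_eq ▸ hχ, hχb.trans ?_⟩
  calc DBound ψ + DBound ρ ≤ (DBound φ + ↑(ε / 2)) + (DBound φ + ↑(ε / 2)) :=
        add_le_add hψb (hρb.trans ((dBound_comp_le ψ _).trans hψb))
    _ = 2 * DBound φ + ε := by
        rw [two_mul, add_add_add_comm, ← ENNReal.coe_add, add_halves]

theorem IsDCS.exists_isDRep_of_restrict {W : Set X} (hW : IsDCS W) {g : X → ℂ}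
    (hg : ∀ x ∉ W, g x = 0) {φ : ℕ → W → ℂ} (hφ : IsDRep (W.domRestrict g) φ)
    (hfin : DBound φ ≠ ⊤) {ε : ℝ≥0} (hε : 0 < ε) :
    ∃ ψ, IsDRep g ψ ∧ DBound ψ ≤ 2 * DBound φ + ε := by
  obtain ⟨A, B, hA, hB, rfl⟩ := hW
  -- `A \ B` is the closed subset `A` of the open subspace `Bᶜ`.
  let m : ((↑) ⁻¹' A : Set (Bᶜ : Set X)) → (A \ B : Set X) := fun c => ⟨c.1.1, c.2, c.1.2⟩
  have hm : Continuous m := by fun_prop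
  obtain ⟨ρ, hρ, hρb⟩ := (hA.preimage continuous_subtype_val).exists_isDRep_of_restrict
    (g := (Bᶜ : Set X).domRestrict g) (fun u hu => hg u fun hx => hu hx.1) (hφ.comp hm)
    (ne_top_of_le_ne_top hfin (dBound_comp_le φ m)) hε
  replace hρb : DBound ρ ≤ 2 * DBound φ + ε := hρb.trans (by gcongr; exact dBound_comp_le φ m)
  obtain ⟨ψ, hψ, hψb⟩ := hB.isOpen_compl.exists_isDRep_of_restrict
    (fun x hx => hg x fun h => hx h.2) hρ (ne_top_of_le_ne_top (by finiteness) hρb)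
  exact ⟨ψ, hψ, hψb.trans hρb⟩

theorem stmt2_general {K : Type u} [MetricSpace K] (W : Set K)
    (f : W → ℂ) (hf : MemD f)
    (g : K → ℂ) (hgW : ∀ w : W, g w = f w) (hg0 : ∀ k, k ∉ W → g k = 0) :
    (IsDCS W → MemD g ∧ DNorm g ≤ 2 * DNorm f) ∧
    (IsOpen W → DNorm g = DNorm f) := by
  obtain rfl : f = W.domRestrict g := funext fun w => (hgW w).symm
  refine ⟨fun hW => ?_, fun hW => le_antisymm ?_ (dNorm_comp_le g continuous_subtype_val)⟩
  · have h2 : DNorm g ≤ 2 * DNorm (W.domRestrict g) :=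
      dNorm_le_mul_dNorm two_ne_zero ofNat_ne_top fun φ hφ hfin _ hε =>
        hW.exists_isDRep_of_restrict hg0 hφ hfin hε
    exact ⟨memD_iff_dNorm_lt_top.mpr
      (h2.trans_lt (mul_lt_top ofNat_lt_top (memD_iff_dNorm_lt_top.mp hf))), h2⟩
  · simpa using dNorm_le_mul_dNorm one_ne_zero one_ne_top fun φ hφ hfin ε _ =>
      (hW.exists_isDRep_of_restrict hg0 hφ hfin).imp fun ψ ⟨hψ, hb⟩ =>
        ⟨hψ, hb.trans (by simp)⟩

/-- for bounded `f ∈ D(W)` and `g = f·χ_W` (equal to `f` on `W`, `0` off `W`):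
if `W` is a DCS then `g ∈ D(K)` with `‖g‖_{D(K)} ≤ 2‖f‖_{D(W)}`;
if `W` is open then `‖g‖_{D(K)} = ‖f‖_{D(W)}`. -/
theorem stmt2 {K : Type u} [MetricSpace K] (W : Set K) (hW : W.Nonempty)
    (f : W → ℂ) (hb : ∃ C : ℝ, ∀ w, ‖f w‖ ≤ C) (hf : MemD f)
    (g : K → ℂ) (hgW : ∀ w : W, g w = f w) (hg0 : ∀ k, k ∉ W → g k = 0) :
    (IsDCS W → MemD g ∧ DNorm g ≤ 2 * DNorm f) ∧
    (IsOpen W → DNorm g = DNorm f) :=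
  stmt2_general W f hf g hgW hg0
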